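/- arXiv:math/0311395 — 3 statements merged into one kernel-verified Lean document; each statement's English description precedes it below -/
import Mathlib

section
/- In ℤ^{1,13}, set u_1 = e_4 - e_7, u_2 = e_1 - e_4, u_3 = h - e_1 - e_2 - e_3, u_4 = e_2 - e_5, u_5 = e_5 - e_9, u_6 = 4(3h - e_1 - ⋯ - e_9) + e_9 - 2(e_10 + e_11 + e_12 + e_13). Then u_6² = -9, u_i² = -2 for 1 ≤ i ≤ 5, u_i·u_{i+1} = 1 for 1 ≤ i ≤ 5, and u_i·u_j = 0 whenever |i - j| ≥ 2. -/
/-- Intersection pairing on `ℤ^{1,13}`. -/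
def pair (x y : Fin 14 → ℤ) : ℤ :=
  x 0 * y 0 - ∑ i : Fin 13, x i.succ * y i.succ

def h : Fin 14 → ℤ := Pi.single 0 1

def e (i : Fin 13) : Fin 14 → ℤ := Pi.single i.succ 1

/-- The configuration `C₇`: `u 0 = u₁, …, u 5 = u₆`. -/
def u : Fin 6 → (Fin 14 → ℤ)
  | 0 => e 3 - e 6                                -- u₁ = e₄ - e₇
  | 1 => e 0 - e 3                                -- u₂ = e₁ - e₄
  | 2 => h - e 0 - e 1 - e 2                      -- u₃ = h - e₁ - e₂ - e₃
  | 3 => e 1 - e 4                                -- u₄ = e₂ - e₅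
  | 4 => e 4 - e 8                                -- u₅ = e₅ - e₉
  | 5 => (4 : ℤ) • ((3 : ℤ) • h - ∑ i : Fin 9, e ⟨i, by omega⟩) + e 8
           - (2 : ℤ) • (e 9 + e 10 + e 11 + e 12) -- u₆

theorem stmt6 :
    pair (u 5) (u 5) = -9 ∧
    (∀ i : Fin 6, (i : ℕ) ≤ 4 → pair (u i) (u i) = -2) ∧
    (∀ i j : Fin 6, (i : ℕ) + 1 = (j : ℕ) → pair (u i) (u j) = 1) ∧
    (∀ i j : Fin 6, (i : ℕ) + 2 ≤ (j : ℕ) → pair (u i) (u j) = 0) := by decide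
end

section
/- Let a, b_1, ..., b_13 be rational numbers with a ≥ b_1 ≥ b_2 ≥ ⋯ ≥ b_13 ≥ 0 and 3a > b_1 + ⋯ + b_13. Then (1/7)·(54a - 18b_1 - 16b_2 - 20b_3 - 18b_4 - 16b_5 - 17b_6 - 18b_7 - 17b_8 - 16b_9 - 5(b_10 + b_11 + b_12 + b_13)) > 0. -/
theorem stmt8 (a : ℚ) (b : Fin 13 → ℚ)
    (h1 : a ≥ b 0) (h2 : ∀ i : Fin 12, b i.castSucc ≥ b i.succ) (h3 : b 12 ≥ 0)
    (h4 : 3 * a > ∑ i, b i) :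
    (1 / 7 : ℚ) * (54 * a - 18 * b 0 - 16 * b 1 - 20 * b 2 - 18 * b 3 - 16 * b 4
      - 17 * b 5 - 18 * b 6 - 17 * b 7 - 16 * b 8
      - 5 * (b 9 + b 10 + b 11 + b 12)) > 0 := by
  have hs : ∑ i, b i = b 0 + b 1 + b 2 + b 3 + b 4 + b 5 + b 6 + b 7 + b 8 + b 9
      + b 10 + b 11 + b 12 := by
    rw [show (Finset.univ : Finset (Fin 13)) = {0,1,2,3,4,5,6,7,8,9,10,11,12} from rfl]
    simp [Finset.sum_insert, Finset.mem_insert]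
    ring
  rw [hs] at h4
  have g0 : b 0 ≥ b 1 := h2 0
  have g1 : b 1 ≥ b 2 := h2 1
  have g2 : b 2 ≥ b 3 := h2 2
  have g3 : b 3 ≥ b 4 := h2 3
  have g4 : b 4 ≥ b 5 := h2 4
  have g5 : b 5 ≥ b 6 := h2 5
  have g6 : b 6 ≥ b 7 := h2 6
  have g7 : b 7 ≥ b 8 := h2 7
  have g8 : b 8 ≥ b 9 := h2 8
  have g9 : b 9 ≥ b 10 := h2 9
  have g10 : b 10 ≥ b 11 := h2 10
  have g11 : b 11 ≥ b 12 := h2 11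
  linarith
end

section
/- Let a, b_1, ..., b_12 be rational numbers with a ≥ b_1 ≥ b_2 ≥ ⋯ ≥ b_12 ≥ 0 and 3a > b_1 + ⋯ + b_12. Then (1/5)·(24a - 8b_1 - 6b_2 - 10b_3 - 8b_4 - 7(b_5 + b_6) - 8b_7 - 7(b_8 + b_9) - 3(b_10 + b_11 + b_12)) > 0. -/
theorem stmt12 (a : ℚ) (b : Fin 12 → ℚ)
    (h1 : a ≥ b 0) (h2 : ∀ i : Fin 11, b i.castSucc ≥ b i.succ) (h3 : b 11 ≥ 0)
    (h4 : 3 * a > ∑ i, b i) :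
    (1 / 5 : ℚ) * (24 * a - 8 * b 0 - 6 * b 1 - 10 * b 2 - 8 * b 3
      - 7 * (b 4 + b 5) - 8 * b 6 - 7 * (b 7 + b 8)
      - 3 * (b 9 + b 10 + b 11)) > 0 := by
  simp only [Fin.sum_univ_succ, Fin.sum_univ_zero] at h4
  have h4' : b 0 + (b 1 + (b 2 + (b 3 + (b 4 + (b 5 + (b 6 + (b 7 + (b 8 + (b 9 + (b 10 + (b 11 + 0))))))))))) < 3 * a := h4
  have g0 : b 1 ≤ b 0 := h2 0
  have g1 : b 2 ≤ b 1 := h2 1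
  have g2 : b 3 ≤ b 2 := h2 2
  have g3 : b 4 ≤ b 3 := h2 3
  have g4 : b 5 ≤ b 4 := h2 4
  have g5 : b 6 ≤ b 5 := h2 5
  have g6 : b 7 ≤ b 6 := h2 6
  have g7 : b 8 ≤ b 7 := h2 7
  have g8 : b 9 ≤ b 8 := h2 8
  have g9 : b 10 ≤ b 9 := h2 9
  have g10 : b 11 ≤ b 10 := h2 10
  linarith
end
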